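/- arXiv:math-ph/0603034 — 2 statements merged into one kernel-verified Lean document; each statement's English description precedes it below -/
import Mathlib

section
/- Let Ω₂ be a bounded self-adjoint operator on a Hilbert space H₂ and Γ : H₂ →L H₁ bounded. Then the friction function a(t) = Γ e^{-iΩ₂ t} Γ† satisfies the dissipation condition: for every continuous compactly supported function v : ℝ → H₁, the real part of ∫₀^∞ ∫₀^∞ ⟨v(t), a(τ) v(t−τ)⟩ dt dτ is nonnegative. -/
open ContinuousLinearMap Complex MeasureTheory

/-- The friction function `a(t) = Γ e^{-iΩ₂ t} Γ†`, where `Ω₂` is a bounded self-adjoint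
operator on the complex Hilbert space `H₂` and `Γ : H₂ →L H₁` is bounded, satisfies the
dissipation condition: for every continuous compactly supported `v : ℝ → H₁` (at rest for
`t ≤ 0`), the real part of `∫₀^∞ ∫₀^∞ ⟪v(t), a(τ) v(t-τ)⟫ dt dτ` is nonnegative. -/
theorem friction_dissipation_condition
    {H₁ H₂ : Type*}
    [NormedAddCommGroup H₁] [InnerProductSpace ℂ H₁] [CompleteSpace H₁]
    [NormedAddCommGroup H₂] [InnerProductSpace ℂ H₂] [CompleteSpace H₂]
    (Γ : H₂ →L[ℂ] H₁) (Ω₂ : H₂ →L[ℂ] H₂) (hΩ₂ : IsSelfAdjoint Ω₂)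
    (a : ℝ → (H₁ →L[ℂ] H₁))
    (ha : ∀ t : ℝ, a t =
      Γ ∘L (NormedSpace.exp ((-(I * (t : ℂ))) • Ω₂)) ∘L ContinuousLinearMap.adjoint Γ)
    (v : ℝ → H₁) (hv : Continuous v) (hvsupp : HasCompactSupport v)
    (hvrest : ∀ t : ℝ, t ≤ 0 → v t = 0) :
    0 ≤ (∫ t in Set.Ioi (0 : ℝ), ∫ τ in Set.Ioi (0 : ℝ),
          (inner ℂ (v t) ((a τ) (v (t - τ))) : ℂ)).re := by
  -- the unitary group and the auxiliary function w
  set E : ℝ → (H₂ →L[ℂ] H₂) := fun s => NormedSpace.exp ((I * (s : ℂ)) • Ω₂) with hE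
  set w : ℝ → H₂ := fun s => E s (adjoint Γ (v s)) with hwdef
  have hEadj : ∀ s : ℝ, adjoint (E s) = E (-s) := by
    intro s
    rw [hE, ← star_eq_adjoint, NormedSpace.star_exp, star_smul, hΩ₂.star_eq]
    congr 1
    simp [mul_comm]
  letI : NormedAlgebra ℚ (H₂ →L[ℂ] H₂) := NormedAlgebra.restrictScalars ℚ ℂ (H₂ →L[ℂ] H₂)
  have hEmul : ∀ s r : ℝ, (E s) * (E r) = E (s + r) := by
    intro s r
    rw [hE, ← NormedSpace.exp_add_of_commute (((Commute.refl Ω₂).smul_left _).smul_right _),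
      ← add_smul]
    norm_num [mul_add]
  have hEcont : Continuous E := NormedSpace.exp_continuous.comp (by fun_prop)
  have hwcont : Continuous w := hEcont.clm_apply ((adjoint Γ).continuous.comp hv)
  have hwrest : ∀ s : ℝ, s ≤ 0 → w s = 0 := by
    intro s hs; simp [hwdef, hvrest s hs]
  have hwsupp : HasCompactSupport w := by
    apply hvsupp.mono
    intro s hs
    simp only [Function.mem_support] at hs ⊢
    intro h0
    exact hs (by simp [hwdef, h0])
  have hwint : Integrable w := hwcont.integrable_of_hasCompactSupport hwsupp
  -- key pointwise identity
  have hA : ∀ t τ : ℝ, (inner ℂ (v t) ((a τ) (v (t - τ))) : ℂ) = inner ℂ (w t) (w (t - τ)) := by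
    intro t τ
    rw [ha]
    have h1 : (NormedSpace.exp ((-(I * (τ : ℂ))) • Ω₂)) = E (-τ) := by
      rw [hE]; norm_num
    simp only [comp_apply, h1, hwdef]
    have key : ∀ u z : H₂, (inner ℂ (E t u) (E (t - τ) z) : ℂ) = inner ℂ u (E (-τ) z) := by
      intro u z
      rw [← adjoint_inner_right, hEadj, ← ContinuousLinearMap.mul_apply, hEmul,
        show -t + (t - τ) = -τ by ring]
    rw [key, ← adjoint_inner_left]
  -- the primitive of w
  set V : ℝ → H₂ := fun t => ∫ s in (0:ℝ)..t, w s with hVdef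
  have hVcont : Continuous V :=
    intervalIntegral.continuous_primitive (fun a b => hwint.intervalIntegrable) 0
  have hVderiv : ∀ t : ℝ, HasDerivAt V (w t) t := fun t =>
    intervalIntegral.integral_hasDerivAt_right hwint.intervalIntegrable
      (hwcont.stronglyMeasurableAtFilter _ _) hwcont.continuousAt
  -- substitution in the inner integral
  have hIioV : ∀ t : ℝ, (∫ s in Set.Iio t, w s) = V t := by
    intro t
    have hVt : V t = ∫ s in (0:ℝ)..t, w s := rfl
    rcases le_or_gt 0 t with ht | ht
    · have hsplit : Set.Iio t = Set.Iio 0 ∪ Set.Ico 0 t := by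
        rw [Set.Iio_union_Ico_eq_Iio ht]
      rw [hsplit, setIntegral_union (by
            simp only [Set.disjoint_left]
            rintro x hx ⟨hx0, -⟩
            exact absurd hx0 (not_le.2 hx)) measurableSet_Ico
          hwint.integrableOn hwint.integrableOn,
        setIntegral_eq_zero_of_forall_eq_zero (fun x hx => hwrest x hx.le), zero_add,
        hVt, intervalIntegral.integral_of_le ht,
        integral_Ico_eq_integral_Ioo, integral_Ioc_eq_integral_Ioo]
    · rw [setIntegral_eq_zero_of_forall_eq_zero (fun x hx => hwrest x (le_of_lt (hx.trans ht))),
        hVt, intervalIntegral.integral_symm, intervalIntegral.integral_of_le ht.le,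
        setIntegral_eq_zero_of_forall_eq_zero (fun x hx => hwrest x hx.2), neg_zero]
  have hsub : ∀ t : ℝ, (∫ τ in Set.Ioi (0:ℝ), w (t - τ)) = V t := by
    intro t
    rw [← hIioV t, ← integral_indicator measurableSet_Ioi, ← integral_indicator measurableSet_Iio]
    rw [← integral_sub_left_eq_self (fun s => (Set.Iio t).indicator w s) volume t]
    congr 1
    funext τ
    simp only [Set.indicator_apply, Set.mem_Ioi, Set.mem_Iio, sub_lt_self_iff]
  -- the inner integral
  have hinner : ∀ t : ℝ, (∫ τ in Set.Ioi (0:ℝ), (inner ℂ (v t) ((a τ) (v (t - τ))) : ℂ))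
      = inner ℂ (w t) (V t) := by
    intro t
    simp only [hA]
    rw [integral_inner ((hwint.comp_sub_left t).integrableOn) (w t), hsub t]
  -- rewrite the double integral
  have hmain : (∫ t in Set.Ioi (0 : ℝ), ∫ τ in Set.Ioi (0 : ℝ),
      (inner ℂ (v t) ((a τ) (v (t - τ))) : ℂ)) = ∫ t in Set.Ioi (0:ℝ), (inner ℂ (w t) (V t) : ℂ) := by
    simp only [hinner]
  rw [hmain]
  -- integrability and support of h t = ⟪w t, V t⟫
  set h : ℝ → ℂ := fun t => inner ℂ (w t) (V t) with hhdef
  have hhcont : Continuous h := hwcont.inner hVcont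
  have hhsupp : HasCompactSupport h := by
    apply hwsupp.mono
    intro s hs
    simp only [Function.mem_support] at hs ⊢
    intro h0
    exact hs (by simp [hhdef, h0])
  have hhint : Integrable h := hhcont.integrable_of_hasCompactSupport hhsupp
  -- choose b beyond the support
  obtain ⟨r, hr⟩ := hwsupp.isBounded.subset_closedBall 0
  set b : ℝ := max r 0 + 1 with hbdef
  have hb0 : (0:ℝ) < b := by positivity
  have hwb : ∀ s : ℝ, b ≤ s → w s = 0 := by
    intro s hs
    apply image_eq_zero_of_notMem_tsupport
    intro hmem
    have := hr hmem
    rw [Real.closedBall_eq_Icc] at this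
    have h1 : s ≤ 0 + r := this.2
    have h2 : r ≤ max r 0 := le_max_left _ _
    linarith
  -- reduce to interval integral
  rw [← RCLike.re_to_complex, ← integral_re hhint.integrableOn]
  have hIoib : (∫ t in Set.Ioi b, RCLike.re (h t)) = 0 :=
    setIntegral_eq_zero_of_forall_eq_zero (fun x hx => by
      simp [hhdef, hwb x (le_of_lt hx)])
  have hsplit2 : (∫ t in Set.Ioi (0:ℝ), RCLike.re (h t))
      = ∫ t in (0:ℝ)..b, RCLike.re (h t) := by
    rw [← Set.Ioc_union_Ioi_eq_Ioi hb0.le,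
      setIntegral_union (Set.Ioc_disjoint_Ioi le_rfl) measurableSet_Ioi
        (hhint.re.integrableOn) (hhint.re.integrableOn),
      hIoib, add_zero, intervalIntegral.integral_of_le hb0.le]
  rw [hsplit2]
  -- FTC
  have hkey : ∀ t : ℝ, HasDerivAt (fun u => RCLike.re (inner ℂ (V u) (V u) : ℂ))
      (2 * RCLike.re (h t)) t := by
    intro t
    have h1 := (hVderiv t).inner ℂ (hVderiv t)
    have h2 := Complex.reCLM.hasFDerivAt.comp_hasDerivAt t h1
    convert h2 using 1
    · rfl
    · rfl
    · rfl
    rw [map_add]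
    simp only [hhdef, two_mul, Complex.reCLM_apply, RCLike.re_to_complex]
    have := inner_re_symm (𝕜 := ℂ) (V t) (w t)
    simp only [RCLike.re_to_complex] at this
    rw [this]
  have hVcontre : Continuous fun t => RCLike.re (h t) :=
    Complex.continuous_re.comp hhcont
  have hftc : (∫ t in (0:ℝ)..b, 2 * RCLike.re (h t))
      = RCLike.re (inner ℂ (V b) (V b) : ℂ) - RCLike.re (inner ℂ (V 0) (V 0) : ℂ) :=
    intervalIntegral.integral_eq_sub_of_hasDerivAt (fun t _ => hkey t)
      ((continuous_const.mul hVcontre).intervalIntegrable _ _)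
  have hV0 : V 0 = 0 := intervalIntegral.integral_same
  rw [intervalIntegral.integral_const_mul] at hftc
  have : (∫ t in (0:ℝ)..b, RCLike.re (h t)) = RCLike.re (inner ℂ (V b) (V b) : ℂ) / 2 := by
    rw [hV0] at hftc
    simp only [inner_zero_left, map_zero, sub_zero] at hftc
    linarith
  rw [this]
  have := inner_self_nonneg (𝕜 := ℂ) (x := V b)
  positivity
end

section
/- Let Ω be a self-adjoint operator on a finite-dimensional complex inner product space H and S a subspace of H with orthogonal projection P onto S. Then the orbit O_Ω(S) equals all of H if and only if P(φ) ≠ 0 for every nonzero eigenvector φ of Ω. -/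
noncomputable section

/-- The smallest `Ω`-invariant subspace containing a subset `S`. -/
def orbit {H : Type*} [NormedAddCommGroup H] [InnerProductSpace ℂ H]
    (Ω : H →ₗ[ℂ] H) (S : Set H) : Submodule ℂ H :=
  sInf {W : Submodule ℂ H | S ⊆ (W : Set H) ∧ ∀ x ∈ W, Ω x ∈ W}

lemma subset_orbit {H : Type*} [NormedAddCommGroup H] [InnerProductSpace ℂ H]
    (Ω : H →ₗ[ℂ] H) (S : Set H) : S ⊆ (orbit Ω S : Set H) := by
  intro x hx
  simp only [orbit, SetLike.mem_coe, Submodule.mem_sInf]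
  intro W hW
  exact hW.1 hx

lemma orbit_invariant {H : Type*} [NormedAddCommGroup H] [InnerProductSpace ℂ H]
    (Ω : H →ₗ[ℂ] H) (S : Set H) : ∀ x ∈ orbit Ω S, Ω x ∈ orbit Ω S := by
  intro x hx
  simp only [orbit, Submodule.mem_sInf] at hx ⊢
  intro W hW
  exact hW.2 x (hx W hW)

lemma orbit_le {H : Type*} [NormedAddCommGroup H] [InnerProductSpace ℂ H]
    (Ω : H →ₗ[ℂ] H) (S : Set H) (W : Submodule ℂ H) (h1 : S ⊆ (W : Set H))
    (h2 : ∀ x ∈ W, Ω x ∈ W) : orbit Ω S ≤ W :=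
  sInf_le ⟨h1, h2⟩

/-- For a self-adjoint operator `Ω` on a finite-dimensional complex inner product space and a
subspace `S` with orthogonal projection `P` onto `S`, the orbit `O_Ω(S)` is all of `H` if and
only if `P φ ≠ 0` for every nonzero eigenvector `φ` of `Ω`. -/
theorem orbit_eq_top_iff_proj_eigenvectors_ne_zero
    {H : Type*} [NormedAddCommGroup H] [InnerProductSpace ℂ H] [FiniteDimensional ℂ H]
    (Ω : H →ₗ[ℂ] H) (hΩ : Ω.IsSymmetric) (S : Submodule ℂ H) :
    orbit Ω (S : Set H) = ⊤ ↔
      ∀ φ : H, φ ≠ 0 → (∃ μ : ℂ, Ω φ = μ • φ) →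
        (Submodule.orthogonalProjectionOnto S φ : H) ≠ 0 := by
  constructor
  · rintro htop φ hφ ⟨μ, hμ⟩ hP
    -- φ ⊥ S
    have hφS : φ ∈ Sᗮ := by
      rwa [← Submodule.orthogonalProjectionOnto_eq_zero_iff, ← Submodule.coe_eq_zero]
    set W : Submodule ℂ H := (ℂ ∙ φ)ᗮ with hW
    have hSW : (S : Set H) ⊆ (W : Set H) := by
      intro y hy
      rw [SetLike.mem_coe, hW, Submodule.mem_orthogonal_singleton_iff_inner_left]
      exact (Submodule.mem_orthogonal S φ).1 hφS y hy
    have hWinv : ∀ x ∈ W, Ω x ∈ W := by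
      intro x hx
      rw [hW, Submodule.mem_orthogonal_singleton_iff_inner_right]
      have hx' : (inner ℂ φ x : ℂ) = 0 :=
        Submodule.mem_orthogonal_singleton_iff_inner_right.1 hx
      calc (inner ℂ φ (Ω x) : ℂ) = inner ℂ (Ω φ) x := (hΩ φ x).symm
        _ = inner ℂ (μ • φ) x := by rw [hμ]
        _ = (starRingEnd ℂ) μ * inner ℂ φ x := by rw [inner_smul_left]
        _ = 0 := by rw [hx', mul_zero]
    have : orbit Ω (S : Set H) ≤ W := orbit_le Ω _ W hSW hWinv
    rw [htop] at this
    have hφW : φ ∈ W := this Submodule.mem_top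
    have : (inner ℂ φ φ : ℂ) = 0 :=
      Submodule.mem_orthogonal_singleton_iff_inner_right.1 hφW
    exact hφ (inner_self_eq_zero.1 this)
  · intro h
    by_contra htop
    set K : Submodule ℂ H := (orbit Ω (S : Set H))ᗮ with hK
    have hKne : K ≠ ⊥ := by
      intro hbot
      apply htop
      have := Submodule.orthogonal_orthogonal (orbit Ω (S : Set H))
      rw [← hK, hbot] at this
      rw [← this, Submodule.bot_orthogonal_eq_top]
    have hKinv : ∀ x ∈ K, Ω x ∈ K := by
      intro x hx
      rw [hK, Submodule.mem_orthogonal]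
      intro y hy
      calc (inner ℂ y (Ω x) : ℂ) = inner ℂ (Ω y) x := (hΩ y x).symm
        _ = 0 := (Submodule.mem_orthogonal _ _).1 hx _ (orbit_invariant Ω _ y hy)
    haveI : Nontrivial K := Submodule.nontrivial_iff_ne_bot.2 hKne
    obtain ⟨μ, hμ⟩ := Module.End.exists_eigenvalue (Ω.restrict hKinv)
    obtain ⟨v, hv⟩ := hμ.exists_hasEigenvector
    have hv0 : (v : H) ≠ 0 := fun h0 => hv.2 (Submodule.coe_eq_zero.1 h0)
    have heig : Ω (v : H) = μ • (v : H) := by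
      have := congrArg (Subtype.val) hv.apply_eq_smul
      simpa using this
    have hPv : (Submodule.orthogonalProjectionOnto S (v : H) : H) ≠ 0 := h v hv0 ⟨μ, heig⟩
    apply hPv
    rw [Submodule.coe_eq_zero, Submodule.orthogonalProjectionOnto_eq_zero_iff]
    exact (Submodule.orthogonal_le (fun x hx => subset_orbit Ω (S : Set H) hx)) v.2
end
end
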